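/- arXiv:0812.0440 — 2 statements merged into one kernel-verified Lean document; each statement's English description precedes it below -/
import Mathlib

section
/- For every n > 1 and every k with 1 ≤ k ≤ n, the number c_{n,k} of indecomposable permutations of S_n with k cycles satisfies c_{n,k} = s_{n,k} − Σ_{p=1}^{n−1} Σ_{i=1}^{min(k,p)} c_{p,i} · s_{n−p,k−i}. -/
/-!
Every permutation of `{0, …, n-1}` has a first block: the least `q ≥ 1` such that it maps
`{0, …, q-1}` onto itself. The permutations of first block `n` are the indecomposable ones, and
those of first block `p < n` are exactly the concatenations of an indecomposable permutation of
`S_p` with an arbitrary permutation of `S_{n-p}`; cycle counts add under concatenation. Sorting the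
permutations of `S_n` with `k` cycles by their first block gives
`s n k = c n k + ∑_{p<n} ∑_i c p i * s (n-p) (k-i)`.
-/

/-- A permutation of `{0,...,n-1}` is indecomposable if it fixes no proper
initial segment `{0,...,p-1}` (for `1 ≤ p < n`) setwise. -/
def Indecomposable {n : ℕ} (α : Equiv.Perm (Fin n)) : Prop :=
  ∀ p : ℕ, 1 ≤ p → p < n → ∃ i : Fin n, (i : ℕ) < p ∧ p ≤ ((α i : ℕ))

/-- The number of cycles (orbits) of a permutation: nontrivial cycles together
with fixed points, the latter counting as cycles of length 1. -/
noncomputable def cycleCount {n : ℕ} (α : Equiv.Perm (Fin n)) : ℕ :=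
  α.cycleType.card + Nat.card {x : Fin n // α x = x}

/-- `c n k`: the number of indecomposable permutations of `S_n` with `k` cycles. -/
noncomputable def c (n k : ℕ) : ℕ :=
  Nat.card {α : Equiv.Perm (Fin n) // Indecomposable α ∧ cycleCount α = k}

/-- `s m j`: the number of permutations of `S_m` with `j` cycles
(unsigned Stirling number of the first kind); `s 0 0 = 1` and `s 0 j = 0` for `j > 0`. -/
noncomputable def s (m j : ℕ) : ℕ :=
  Nat.card {α : Equiv.Perm (Fin m) // cycleCount α = j}

open Equiv Equiv.Perm Finset

namespace Equiv.Perm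

variable {α β : Type*}

theorem cycleType_permCongr [Fintype α] [DecidableEq α] [Fintype β] [DecidableEq β]
    (e : α ≃ β) (σ : Perm α) : (e.permCongr σ).cycleType = σ.cycleType := by
  have : e.permCongr σ = σ.extendDomain (e.trans (subtypeUnivEquiv fun _ => trivial).symm) := by
    ext b
    rw [extendDomain_apply_subtype _ _ trivial]
    simp [subtypeUnivEquiv]
  rw [this, cycleType_extendDomain]

theorem cycleType_sumCongr_one [Fintype α] [DecidableEq α] [Fintype β] [DecidableEq β]
    (σ : Perm α) : (sumCongr σ (1 : Perm β)).cycleType = σ.cycleType := by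
  have : sumCongr σ (1 : Perm β) = σ.extendDomain (ofInjective Sum.inl Sum.inl_injective) := by
    ext (a | b)
    · rw [extendDomain_apply_subtype _ _ ⟨a, rfl⟩]
      simp
    · rw [extendDomain_apply_not_subtype _ _ (by simp)]
      simp
  rw [this, cycleType_extendDomain]

theorem cycleType_sumCongr [Fintype α] [DecidableEq α] [Fintype β] [DecidableEq β]
    (σ : Perm α) (τ : Perm β) : (sumCongr σ τ).cycleType = σ.cycleType + τ.cycleType := by
  have hτ : (sumCongr (1 : Perm α) τ).cycleType = τ.cycleType := by
    rw [← cycleType_sumCongr_one (β := α) τ, ← cycleType_permCongr (sumComm β α)]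
    congr 1
    ext (b | a) <;> rfl
  have hdisj : Disjoint (sumCongr σ (1 : Perm β)) (sumCongr 1 τ) := by
    rintro (a | b) <;> simp
  rw [← one_mul τ, ← mul_one σ, ← sumCongr_mul, mul_one, one_mul, hdisj.cycleType_mul,
    cycleType_sumCongr_one, hτ]

theorem card_fixedPoints_permCongr (e : α ≃ β) (σ : Perm α) :
    Nat.card {b // e.permCongr σ b = b} = Nat.card {a // σ a = a} :=
  Nat.card_congr (e.subtypeEquiv fun a => by simp [permCongr_apply]).symm

theorem card_fixedPoints_sumCongr [Finite α] [Finite β] (σ : Perm α) (τ : Perm β) :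
    Nat.card {x // sumCongr σ τ x = x} = Nat.card {a // σ a = a} + Nat.card {b // τ b = b} := by
  rw [← Nat.card_sum]
  exact Nat.card_congr (subtypeSum.trans (Equiv.sumCongr (subtypeEquivRight fun _ => by simp)
    (subtypeEquivRight fun _ => by simp)))

end Equiv.Perm

theorem Nat.Partition.card_parts_le {n : ℕ} (π : n.Partition) : π.parts.card ≤ n :=
  calc π.parts.card = π.parts.card • 1 := by simp
    _ ≤ π.parts.sum := Multiset.card_nsmul_le_sum fun _ hi => π.parts_pos hi
    _ = n := π.parts_sum

theorem Nat.Partition.card_parts_pos {n : ℕ} (π : n.Partition) (hn : 0 < n) :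
    0 < π.parts.card := by
  refine Multiset.card_pos.2 fun h => ?_
  have := π.parts_sum
  simp [h] at this
  omega

theorem cycleCount_eq_card_parts_partition {n : ℕ} (σ : Perm (Fin n)) :
    cycleCount σ = σ.partition.parts.card := by
  rw [cycleCount, parts_partition, Multiset.card_add, Multiset.card_replicate,
    ← sum_cycleType, ← card_fixedPoints, Nat.card_eq_fintype_card]
  rfl

theorem cycleCount_le {n : ℕ} (σ : Perm (Fin n)) : cycleCount σ ≤ n := by
  simpa [cycleCount_eq_card_parts_partition] using σ.partition.card_parts_le

theorem one_le_cycleCount {n : ℕ} (hn : 0 < n) (σ : Perm (Fin n)) : 1 ≤ cycleCount σ := by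
  rw [cycleCount_eq_card_parts_partition]
  exact σ.partition.card_parts_pos (by simpa using hn)

def StabilizesPrefix {n : ℕ} (σ : Perm (Fin n)) (q : ℕ) : Prop :=
  ∀ i : Fin n, (i : ℕ) < q → (σ i : ℕ) < q

theorem stabilizesPrefix_self {n : ℕ} (σ : Perm (Fin n)) : StabilizesPrefix σ n :=
  fun i _ => (σ i).isLt

theorem indecomposable_iff {n : ℕ} (σ : Perm (Fin n)) :
    Indecomposable σ ↔ ∀ q, 1 ≤ q → q < n → ¬StabilizesPrefix σ q := by
  simp [Indecomposable, StabilizesPrefix]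

theorem exists_stabilizesPrefix {n : ℕ} (σ : Perm (Fin n)) : ∃ q, 1 ≤ q ∧ StabilizesPrefix σ q :=
  ⟨n + 1, by omega, fun i _ => by omega⟩

open Classical in
noncomputable def firstBlock {n : ℕ} (σ : Perm (Fin n)) : ℕ :=
  Nat.find (exists_stabilizesPrefix σ)

section firstBlock

variable {n : ℕ} (σ : Perm (Fin n))

theorem one_le_firstBlock : 1 ≤ firstBlock σ := by
  classical exact (Nat.find_spec (exists_stabilizesPrefix σ)).1

theorem stabilizesPrefix_firstBlock : StabilizesPrefix σ (firstBlock σ) := by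
  classical exact (Nat.find_spec (exists_stabilizesPrefix σ)).2

theorem firstBlock_le_of_stabilizesPrefix {q : ℕ} (hq : 1 ≤ q) (h : StabilizesPrefix σ q) :
    firstBlock σ ≤ q := by
  classical exact Nat.find_min' _ ⟨hq, h⟩

theorem firstBlock_le (hn : 0 < n) : firstBlock σ ≤ n :=
  firstBlock_le_of_stabilizesPrefix σ hn (stabilizesPrefix_self σ)

theorem indecomposable_iff_firstBlock_eq (hn : 0 < n) : Indecomposable σ ↔ firstBlock σ = n := by
  rw [indecomposable_iff]
  refine ⟨fun h => (firstBlock_le σ hn).antisymm (not_lt.1 fun hlt => ?_), fun h q hq hqn hs => ?_⟩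
  · exact h _ (one_le_firstBlock σ) hlt (stabilizesPrefix_firstBlock σ)
  · have := firstBlock_le_of_stabilizesPrefix σ hq hs
    omega

end firstBlock

def concatPerm {p m : ℕ} (σ : Perm (Fin p)) (τ : Perm (Fin m)) : Perm (Fin (p + m)) :=
  finSumFinEquiv.permCongr (σ.sumCongr τ)

section concatPerm

variable {p m : ℕ} (σ : Perm (Fin p)) (τ : Perm (Fin m))

@[simp]
theorem concatPerm_apply_castAdd (i : Fin p) :
    concatPerm σ τ (Fin.castAdd m i) = Fin.castAdd m (σ i) := by
  simp [concatPerm, permCongr_apply]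

theorem cycleCount_concatPerm : cycleCount (concatPerm σ τ) = cycleCount σ + cycleCount τ := by
  rw [cycleCount, concatPerm, cycleType_permCongr, card_fixedPoints_permCongr, cycleType_sumCongr,
    card_fixedPoints_sumCongr, Multiset.card_add, cycleCount, cycleCount]
  ring

theorem concatPerm_injective :
    Function.Injective fun x : Perm (Fin p) × Perm (Fin m) => concatPerm x.1 x.2 :=
  fun _ _ h => sumCongrHom_injective (finSumFinEquiv.permCongr.injective h)

theorem stabilizesPrefix_concatPerm_iff {q : ℕ} (hq : q ≤ p) :
    StabilizesPrefix (concatPerm σ τ) q ↔ StabilizesPrefix σ q := by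
  refine ⟨fun h i hi => by simpa using h (Fin.castAdd m i) hi, fun h x hx => ?_⟩
  obtain ⟨i, rfl⟩ : ∃ i : Fin p, Fin.castAdd m i = x := ⟨⟨x, by omega⟩, rfl⟩
  simpa using h i hx

theorem firstBlock_concatPerm (hp : 0 < p) : firstBlock (concatPerm σ τ) = firstBlock σ := by
  have hσ := firstBlock_le σ hp
  have hle : firstBlock (concatPerm σ τ) ≤ firstBlock σ :=
    firstBlock_le_of_stabilizesPrefix _ (one_le_firstBlock σ)
      ((stabilizesPrefix_concatPerm_iff σ τ hσ).2 (stabilizesPrefix_firstBlock σ))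
  refine hle.antisymm (firstBlock_le_of_stabilizesPrefix _ (one_le_firstBlock _) ?_)
  exact (stabilizesPrefix_concatPerm_iff σ τ (hle.trans hσ)).1 (stabilizesPrefix_firstBlock _)

end concatPerm

theorem exists_concatPerm_eq {p m : ℕ} {α : Perm (Fin (p + m))} (h : StabilizesPrefix α p) :
    ∃ σ τ, concatPerm σ τ = α := by
  have hmaps : Set.MapsTo (finSumFinEquiv.symm.permCongr α) (Set.range Sum.inl)
      (Set.range Sum.inl) := by
    rintro _ ⟨i, rfl⟩
    have hi := h (Fin.castAdd m i) i.isLt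
    refine ⟨⟨α (Fin.castAdd m i), hi⟩, ?_⟩
    simp [permCongr_apply, eq_symm_apply]
  obtain ⟨⟨σ, τ⟩, hστ⟩ := mem_sumCongrHom_range_of_perm_mapsTo_inl hmaps
  rw [sumCongrHom_apply] at hστ
  refine ⟨σ, τ, ?_⟩
  rw [concatPerm, hστ, ← permCongr_symm, apply_symm_apply]

theorem card_firstBlock_eq_card_pairs {p m k : ℕ} (hp : 0 < p) :
    Nat.card {α : Perm (Fin (p + m)) // cycleCount α = k ∧ firstBlock α = p} =
      Nat.card {x : Perm (Fin p) × Perm (Fin m) //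
        Indecomposable x.1 ∧ cycleCount x.1 + cycleCount x.2 = k} := by
  symm
  refine Nat.card_congr (Equiv.ofBijective (fun x => ⟨concatPerm x.1.1 x.1.2, ?_⟩) ⟨?_, ?_⟩)
  · rw [cycleCount_concatPerm, firstBlock_concatPerm _ _ hp, ← indecomposable_iff_firstBlock_eq _ hp]
    exact ⟨x.2.2, x.2.1⟩
  · exact fun x y h => Subtype.ext (concatPerm_injective (congrArg Subtype.val h))
  · rintro ⟨α, hk, hα⟩
    obtain ⟨σ, τ, rfl⟩ := exists_concatPerm_eq (hα ▸ stabilizesPrefix_firstBlock α)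
    rw [cycleCount_concatPerm] at hk
    rw [firstBlock_concatPerm _ _ hp, ← indecomposable_iff_firstBlock_eq _ hp] at hα
    exact ⟨⟨(σ, τ), hα, hk⟩, rfl⟩

theorem card_pairs_eq_sum {p m k : ℕ} (hp : 0 < p) :
    Nat.card {x : Perm (Fin p) × Perm (Fin m) //
        Indecomposable x.1 ∧ cycleCount x.1 + cycleCount x.2 = k} =
      ∑ i ∈ Icc 1 (min k p), c p i * s m (k - i) := by
  classical
  simp only [c, s, Nat.card_eq_fintype_card, Fintype.card_subtype]
  rw [card_eq_sum_card_fiberwise (f := fun x => cycleCount x.1) (t := Icc 1 (min k p))]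
  · refine sum_congr rfl fun i hi => ?_
    rw [mem_Icc] at hi
    rw [filter_filter, ← card_product, ← filter_product, univ_product_univ]
    congr 1
    refine filter_congr fun x _ => ⟨?_, ?_⟩
    · rintro ⟨⟨hx, hk⟩, rfl⟩
      exact ⟨⟨hx, rfl⟩, by omega⟩
    · rintro ⟨⟨hx, rfl⟩, hk⟩
      exact ⟨⟨hx, by omega⟩, rfl⟩
  · intro x hx
    obtain ⟨-, -, hk⟩ := mem_filter.1 hx
    have := one_le_cycleCount hp x.1
    have := cycleCount_le x.1
    simp only [mem_coe, mem_Icc, le_min_iff]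
    omega

theorem card_firstBlock_eq {n p m k : ℕ} (hp : 0 < p) (h : p + m = n) :
    Nat.card {α : Perm (Fin n) // cycleCount α = k ∧ firstBlock α = p} =
      ∑ i ∈ Icc 1 (min k p), c p i * s m (k - i) := by
  subst h
  rw [card_firstBlock_eq_card_pairs hp, card_pairs_eq_sum hp]

theorem s_eq_c_add_sum_card_firstBlock_eq {n : ℕ} (hn : 0 < n) (k : ℕ) :
    s n k = c n k + ∑ p ∈ Icc 1 (n - 1),
      Nat.card {α : Perm (Fin n) // cycleCount α = k ∧ firstBlock α = p} := by
  classical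
  have hfib : s n k = ∑ p ∈ Icc 1 n,
      Nat.card {α : Perm (Fin n) // cycleCount α = k ∧ firstBlock α = p} := by
    simp only [s, Nat.card_eq_fintype_card, Fintype.card_subtype]
    rw [card_eq_sum_card_fiberwise (f := firstBlock) (t := Icc 1 n)
      fun α _ => mem_Icc.2 ⟨one_le_firstBlock α, firstBlock_le α hn⟩]
    simp only [filter_filter]
  have htop : Nat.card {α : Perm (Fin n) // cycleCount α = k ∧ firstBlock α = n} = c n k :=
    Nat.card_congr <| subtypeEquivRight fun α => by
      rw [← indecomposable_iff_firstBlock_eq α hn, and_comm]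
  obtain ⟨n, rfl⟩ : ∃ n', n = n' + 1 := ⟨n - 1, by omega⟩
  rw [hfib, sum_Icc_succ_top (by omega), htop, add_comm, Nat.add_sub_cancel]

theorem indec_stirling_recurrence_general (n k : ℕ) :
    (c n k : ℤ) =
      (s n k : ℤ) -
        ∑ p ∈ Finset.Icc 1 (n - 1), ∑ i ∈ Finset.Icc 1 (min k p),
          (c p i : ℤ) * (s (n - p) (k - i) : ℤ) := by
  rcases Nat.eq_zero_or_pos n with rfl | hn
  · simp [c, s, Indecomposable]
  rw [s_eq_c_add_sum_card_firstBlock_eq hn k,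
    sum_congr rfl fun p hp => card_firstBlock_eq (m := n - p) (mem_Icc.1 hp).1 (by grind)]
  push_cast
  ring

theorem indec_stirling_recurrence (n k : ℕ) (hn : 1 < n) (hk1 : 1 ≤ k) (hk2 : k ≤ n) :
    (c n k : ℤ) =
      (s n k : ℤ) -
        ∑ p ∈ Finset.Icc 1 (n - 1), ∑ i ∈ Finset.Icc 1 (min k p),
          (c p i : ℤ) * (s (n - p) (k - i) : ℤ) :=
  indec_stirling_recurrence_general n k
end

section
/- Let U(z,y) = Σ_{m≥0} M'_{m+1}(y) · z^m be the formal power series in z with coefficients in the polynomial ring ℤ[y]. Then U satisfies the functional equation U(z,y) = y + z · U(z,y) · U(z,y+1), where U(z,y+1) denotes the power series obtained from U by substituting y+1 for y in each coefficient. -/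
/-- A Dyck path, encoded as a list of booleans (`true` = letter `a` (up step),
`false` = letter `b` (down step)): equally many `a`'s and `b`'s, and every
prefix has at least as many `a`'s as `b`'s. -/
def IsDyck (w : List Bool) : Prop :=
  w.count true = w.count false ∧
    ∀ k ≤ w.length, (w.take k).count false ≤ (w.take k).count true

/-- A primitive Dyck path: one which is not the concatenation of two nonempty
Dyck paths. -/
def IsPrimitiveDyck (w : List Bool) : Prop :=
  IsDyck w ∧ ¬ ∃ u v : List Bool, u ≠ [] ∧ v ≠ [] ∧ IsDyck u ∧ IsDyck v ∧ w = u ++ v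

/-- The polynomial `M(w)` in the variable `y = X`: the product over all
occurrences of `b` in `w` of `y + h`, where `h` is the number of `a`'s minus
the number of `b`'s in the prefix ending at that occurrence. -/
noncomputable def Mpoly (w : List Bool) : Polynomial ℤ :=
  ∏ i ∈ Finset.range w.length,
    if w.getD i true = false then
      Polynomial.X + Polynomial.C (((w.take (i + 1)).count true : ℤ) -
        ((w.take (i + 1)).count false : ℤ))
    else 1

open scoped Classical in
/-- `MSum' m` is the sum of `M(w)` over all primitive Dyck paths `w` of length `2m`. -/
noncomputable def MSum' (m : ℕ) : Polynomial ℤ :=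
  ∑ f : Fin (2 * m) → Bool,
    if IsPrimitiveDyck (List.ofFn f) then Mpoly (List.ofFn f) else 0

/-- The formal power series `U(z,y) = ∑_{m ≥ 0} M'_{m+1}(y) zᵐ` in `z`
with coefficients in `ℤ[y]`. -/
noncomputable def U : PowerSeries (Polynomial ℤ) :=
  PowerSeries.mk fun m => MSum' (m + 1)

/-!
Let `V(z,y)` be the sum of `M(w) z^(|w|/2)` over all Dyck paths `w`. A primitive Dyck path of
positive length is `a v b` with `v` a Dyck path; inside it every height is raised by one and the
final `b` contributes `y`, so `U(y) = y V(y+1)`. A nonempty Dyck path factors uniquely as a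
nonempty primitive path followed by a Dyck path, and `M` is multiplicative over this factorization,
so `V = 1 + z U V`. Hence `U = y (1 + z U(y+1) V(y+1)) = y + z U(y+1) U`.
-/

open Polynomial Finset

def excess (w : List Bool) : ℤ := w.count true - w.count false

@[simp]
lemma excess_nil : excess [] = 0 := by simp [excess]

@[simp]
lemma excess_cons_true (w : List Bool) : excess (true :: w) = excess w + 1 := by
  simp [excess]; ring

@[simp]
lemma excess_cons_false (w : List Bool) : excess (false :: w) = excess w - 1 := by
  simp [excess]; ring

lemma excess_append (u v : List Bool) : excess (u ++ v) = excess u + excess v := by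
  simp [excess]; ring

lemma isDyck_iff_excess {w : List Bool} :
    IsDyck w ↔ excess w = 0 ∧ ∀ k, 0 ≤ excess (w.take k) := by
  unfold IsDyck excess
  refine ⟨fun ⟨h, hpre⟩ => ⟨by omega, fun k => ?_⟩, fun ⟨h, hpre⟩ => ⟨by omega, fun k _ => ?_⟩⟩
  · rcases le_total k w.length with hk | hk
    · have := hpre k hk; omega
    · rw [List.take_of_length_le hk]; omega
  · have := hpre k; omega

lemma IsDyck.length_eq {w : List Bool} (h : IsDyck w) : w.length = 2 * w.count true := by
  have := List.count_true_add_count_false w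
  have := h.1
  omega

lemma IsDyck.append {u v : List Bool} (hu : IsDyck u) (hv : IsDyck v) : IsDyck (u ++ v) := by
  rw [isDyck_iff_excess] at *
  refine ⟨by rw [excess_append, hu.1, hv.1, add_zero], fun k => ?_⟩
  rw [List.take_append, excess_append]
  exact add_nonneg (hu.2 k) (hv.2 _)

lemma IsDyck.of_append {u v : List Bool} (huv : IsDyck (u ++ v)) (hu : IsDyck u) :
    IsDyck v := by
  rw [isDyck_iff_excess] at *
  refine ⟨by linarith [excess_append u v], fun k => ?_⟩
  have := huv.2 (u.length + k)
  rwa [List.take_length_add_append, excess_append, hu.1, zero_add] at this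

lemma isPrimitiveDyck_iff {w : List Bool} :
    IsPrimitiveDyck w ↔
      IsDyck w ∧ ∀ k, 0 < k → k < w.length → 0 < excess (w.take k) := by
  refine ⟨fun ⟨hw, hsplit⟩ => ⟨hw, fun k hk hkw => ?_⟩, fun ⟨hw, hpos⟩ => ⟨hw, ?_⟩⟩
  · by_contra! hle
    have hpre : IsDyck (w.take k) := by
      refine isDyck_iff_excess.2 ⟨le_antisymm hle ((isDyck_iff_excess.1 hw).2 k), fun j => ?_⟩
      rw [List.take_take]
      exact (isDyck_iff_excess.1 hw).2 _
    have hw' : w = w.take k ++ w.drop k := (List.take_append_drop k w).symm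
    refine hsplit ⟨w.take k, w.drop k, ?_, ?_, hpre, (hw' ▸ hw).of_append hpre, hw'⟩
    · rw [← List.length_pos_iff, List.length_take]; omega
    · rw [← List.length_pos_iff, List.length_drop]; omega
  · rintro ⟨u, v, hu, hv, hud, -, rfl⟩
    have := hpos u.length (List.length_pos_iff.2 hu)
      (by simpa using List.length_pos_iff.2 hv)
    rw [List.take_left, (isDyck_iff_excess.1 hud).1] at this
    exact this.false

lemma IsPrimitiveDyck.length_le_of_prefix {p q v : List Bool} (hp : IsPrimitiveDyck p)
    (hq : IsDyck q) (hne : q ≠ []) (h : q <+: p ++ v) : p.length ≤ q.length := by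
  by_contra! hlt
  have hpos := (isPrimitiveDyck_iff.1 hp).2 q.length (List.length_pos_iff.2 hne) hlt
  rw [← List.take_append_of_le_length (l₂ := v) hlt.le, ← List.prefix_iff_eq_take.1 h,
    (isDyck_iff_excess.1 hq).1] at hpos
  exact hpos.false

lemma isPrimitiveDyck_wrap {v : List Bool} (hv : IsDyck v) :
    IsPrimitiveDyck (true :: (v ++ [false])) := by
  rw [isDyck_iff_excess] at hv
  have hlast : ∀ i, -1 ≤ excess ([false].take i) := by
    rintro (_ | _) <;> simp
  refine isPrimitiveDyck_iff.2 ⟨isDyck_iff_excess.2 ⟨?_, ?_⟩, ?_⟩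
  · simp [excess_append, hv.1]
  · rintro (_ | j)
    · simp
    · rw [List.take_succ_cons, excess_cons_true, List.take_append, excess_append]
      linarith [hv.2 j, hlast (j - v.length)]
  · rintro (_ | j) hj hjw
    · omega
    · simp only [List.length_cons, List.length_append, List.length_nil] at hjw
      rw [List.take_succ_cons, excess_cons_true, List.take_append_of_le_length (by omega)]
      linarith [hv.2 j]

lemma IsPrimitiveDyck.exists_eq_wrap {w : List Bool} (hw : IsPrimitiveDyck w) (hne : w ≠ []) :
    ∃ v, IsDyck v ∧ w = true :: (v ++ [false]) := by
  obtain ⟨hd, hpos⟩ := isPrimitiveDyck_iff.1 hw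
  have hzero := (isDyck_iff_excess.1 hd).1
  obtain ⟨x, t, rfl⟩ := List.exists_cons_of_ne_nil hne
  obtain rfl | ⟨v, y, rfl⟩ := List.eq_nil_or_concat' t
  · cases x <;> simp at hzero
  have hlen : (x :: (v ++ [y])).length = v.length + 2 := by simp
  have hprefix : ∀ j ≤ v.length, 0 < excess (x :: v.take j) := fun j hj => by
    have := hpos (j + 1) (by omega) (by omega)
    rwa [List.take_succ_cons, List.take_append_of_le_length hj] at this
  have hx : x = true := by
    have := hprefix 0 (Nat.zero_le _)
    cases x <;> simp_all
  subst hx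
  have hv : 0 ≤ excess v := by
    have := hprefix v.length le_rfl
    rw [List.take_length, excess_cons_true] at this
    omega
  have hy : y = false := by
    cases y <;> simp_all [excess_append]; omega
  subst hy
  refine ⟨v, isDyck_iff_excess.2 ⟨?_, fun j => ?_⟩, rfl⟩
  · simp [excess_append] at hzero; omega
  · rcases le_total j v.length with hj | hj
    · have := hprefix j hj
      rw [excess_cons_true] at this
      omega
    · rw [List.take_of_length_le hj]; exact hv

lemma IsDyck.exists_eq_primitive_append {w : List Bool} (hw : IsDyck w) (hne : w ≠ []) :
    ∃ p v, IsPrimitiveDyck p ∧ p ≠ [] ∧ IsDyck v ∧ w = p ++ v := by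
  induction h : w.length using Nat.strong_induction_on generalizing w with
  | _ n ih =>
    by_cases hprim : IsPrimitiveDyck w
    · exact ⟨w, [], hprim, hne, isDyck_iff_excess.2 ⟨by simp, by simp⟩, by simp⟩
    obtain ⟨u, u', hu, hu', hud, hud', rfl⟩ : ∃ u u', u ≠ [] ∧ u' ≠ [] ∧ IsDyck u ∧ IsDyck u' ∧
        w = u ++ u' := by
      simpa [IsPrimitiveDyck, hw] using hprim
    have hlt : u.length < n := by
      rw [← h, List.length_append]; have := List.length_pos_iff.2 hu'; omega
    obtain ⟨p, v, hp, hpne, hv, rfl⟩ := ih _ hlt hud hu rfl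
    exact ⟨p, v ++ u', hp, hpne, hv.append hud', by simp⟩

lemma primitive_append_inj {p v p' v' : List Bool} (hp : IsPrimitiveDyck p) (hpne : p ≠ [])
    (hp' : IsPrimitiveDyck p') (hp'ne : p' ≠ []) (h : p ++ v = p' ++ v') : p = p' ∧ v = v' := by
  refine List.append_inj h (le_antisymm ?_ ?_)
  · exact hp.length_le_of_prefix hp'.1 hp'ne (h ▸ List.prefix_append p' v')
  · exact hp'.length_le_of_prefix hp.1 hpne (h ▸ List.prefix_append p v)

/-- `MpolyAt c w` is `M(w)` with `y` replaced by `y + c`: the path is read as starting at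
height `c`. -/
noncomputable def MpolyAt : ℤ → List Bool → ℤ[X]
  | _, [] => 1
  | c, true :: w => MpolyAt (c + 1) w
  | c, false :: w => (X + C (c - 1)) * MpolyAt (c - 1) w

lemma prod_eq_MpolyAt (c : ℤ) (w : List Bool) :
    ∏ i ∈ range w.length,
      (if w.getD i true = false then X + C (c + excess (w.take (i + 1))) else 1) =
    MpolyAt c w := by
  induction w generalizing c with
  | nil => rfl
  | cons b w ih =>
    rw [List.length_cons, prod_range_succ']
    cases b
    · have hc : ∀ e : ℤ, c + (e - 1) = c - 1 + e := fun e => by ring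
      simp only [MpolyAt, ← ih, List.getD_cons_succ, List.getD_cons_zero, List.take_succ_cons,
        List.take_zero, excess_cons_false, excess_nil, hc, if_true, add_zero, mul_comm]
    · have hc : ∀ e : ℤ, c + (e + 1) = c + 1 + e := fun e => by ring
      simp only [MpolyAt, ← ih, List.getD_cons_succ, List.getD_cons_zero, List.take_succ_cons,
        excess_cons_true, hc, Bool.true_eq_false, if_false, mul_one]

lemma Mpoly_eq_MpolyAt (w : List Bool) : Mpoly w = MpolyAt 0 w := by
  rw [← prod_eq_MpolyAt]
  simp only [Mpoly, excess, zero_add]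

lemma MpolyAt_append (c : ℤ) (u v : List Bool) :
    MpolyAt c (u ++ v) = MpolyAt c u * MpolyAt (c + excess u) v := by
  induction u generalizing c with
  | nil => simp [MpolyAt]
  | cons b u ih =>
    cases b
    · simp only [List.cons_append, MpolyAt, ih, excess_cons_false, mul_assoc, sub_add_eq_add_sub,
        add_sub_assoc']
    · simp only [List.cons_append, MpolyAt, ih, excess_cons_true, add_right_comm, add_assoc]

lemma aeval_MpolyAt (c : ℤ) (w : List Bool) :
    aeval (X + 1 : ℤ[X]) (MpolyAt c w) = MpolyAt (c + 1) w := by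
  induction w generalizing c with
  | nil => simp [MpolyAt]
  | cons b w ih =>
    cases b
    · simp only [MpolyAt, map_mul, map_add, aeval_X, aeval_C, ih, algebraMap_eq, sub_add_cancel,
        add_sub_cancel_right]
      rw [C_sub, C_1]
      ring
    · simp only [MpolyAt, ih]

lemma Mpoly_wrap {v : List Bool} (hv : excess v = 0) :
    Mpoly (true :: (v ++ [false])) = X * aeval (X + 1 : ℤ[X]) (Mpoly v) := by
  simp [Mpoly_eq_MpolyAt, MpolyAt, MpolyAt_append, aeval_MpolyAt, hv, mul_comm]

lemma Mpoly_append {p : List Bool} (hp : excess p = 0) (v : List Bool) :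
    Mpoly (p ++ v) = Mpoly p * Mpoly v := by
  rw [Mpoly_eq_MpolyAt, MpolyAt_append, hp, zero_add, ← Mpoly_eq_MpolyAt, ← Mpoly_eq_MpolyAt]

def words (n : ℕ) : Finset (List Bool) :=
  univ.image (List.ofFn : (Fin n → Bool) → List Bool)

lemma mem_words {n : ℕ} {w : List Bool} : w ∈ words n ↔ w.length = n := by
  refine ⟨?_, fun h => ?_⟩
  · simp only [words, mem_image, mem_univ, true_and]
    rintro ⟨f, rfl⟩
    exact List.length_ofFn
  · subst h
    exact mem_image.2 ⟨fun i => w[(i : ℕ)], mem_univ _, List.ofFn_getElem⟩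

open scoped Classical in
noncomputable def dyckPaths (n : ℕ) : Finset (List Bool) :=
  (words (2 * n)).filter IsDyck

open scoped Classical in
noncomputable def primitiveDyckPaths (n : ℕ) : Finset (List Bool) :=
  (words (2 * n)).filter IsPrimitiveDyck

lemma mem_dyckPaths {n : ℕ} {w : List Bool} :
    w ∈ dyckPaths n ↔ w.length = 2 * n ∧ IsDyck w := by
  classical
  rw [dyckPaths, mem_filter, mem_words]

lemma mem_primitiveDyckPaths {n : ℕ} {w : List Bool} :
    w ∈ primitiveDyckPaths n ↔ w.length = 2 * n ∧ IsPrimitiveDyck w := by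
  classical
  rw [primitiveDyckPaths, mem_filter, mem_words]

lemma MSum'_eq_sum (n : ℕ) : MSum' n = ∑ w ∈ primitiveDyckPaths n, Mpoly w := by
  classical
  rw [MSum', primitiveDyckPaths, sum_filter, words,
    sum_image fun f _ g _ h => List.ofFn_injective h]

lemma dyckPaths_zero : dyckPaths 0 = {[]} := by
  ext w
  rw [mem_dyckPaths, mem_singleton, mul_zero, List.length_eq_zero_iff]
  exact ⟨And.left, fun h => ⟨h, h ▸ isDyck_iff_excess.2 ⟨by simp, by simp⟩⟩⟩

lemma primitiveDyckPaths_succ (n : ℕ) :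
    primitiveDyckPaths (n + 1) = (dyckPaths n).image fun v => true :: (v ++ [false]) := by
  ext w
  simp only [mem_primitiveDyckPaths, mem_image, mem_dyckPaths]
  constructor
  · rintro ⟨hlen, hw⟩
    obtain ⟨v, hv, rfl⟩ := hw.exists_eq_wrap (by rintro rfl; simp at hlen)
    exact ⟨v, ⟨by simp at hlen; omega, hv⟩, rfl⟩
  · rintro ⟨v, ⟨hlen, hv⟩, rfl⟩
    exact ⟨by simp [hlen]; ring, isPrimitiveDyck_wrap hv⟩

lemma sum_dyckPaths_succ {M : Type*} [AddCommMonoid M] (f : List Bool → M) (n : ℕ) :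
    ∑ w ∈ dyckPaths (n + 1), f w =
      ∑ ij ∈ antidiagonal n, ∑ p ∈ primitiveDyckPaths (ij.1 + 1), ∑ v ∈ dyckPaths ij.2,
        f (p ++ v) := by
  simp_rw [← sum_product', sum_sigma']
  symm
  refine sum_bij (fun x _ => x.2.1 ++ x.2.2) ?_ ?_ ?_ (fun _ _ => rfl)
  · rintro ⟨⟨i, j⟩, p, v⟩ hx
    simp only [mem_sigma, mem_product, HasAntidiagonal.mem_antidiagonal, mem_primitiveDyckPaths,
      mem_dyckPaths] at hx ⊢
    exact ⟨by simp; omega, hx.2.1.2.1.append hx.2.2.2⟩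
  · rintro ⟨⟨i, j⟩, p, v⟩ hx ⟨⟨i', j'⟩, p', v'⟩ hx' h
    simp only [mem_sigma, mem_product, HasAntidiagonal.mem_antidiagonal, mem_primitiveDyckPaths,
      mem_dyckPaths] at hx hx'
    have hne : ∀ {q : List Bool} {k : ℕ}, q.length = 2 * (k + 1) → q ≠ [] := by
      rintro q k hq rfl; simp at hq
    obtain ⟨rfl, rfl⟩ := primitive_append_inj hx.2.1.2 (hne hx.2.1.1) hx'.2.1.2
      (hne hx'.2.1.1) h
    obtain rfl : i = i' := by omega
    obtain rfl : j = j' := by omega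
    rfl
  · intro w hw
    rw [mem_dyckPaths] at hw
    obtain ⟨p, v, hp, hpne, hv, rfl⟩ := hw.2.exists_eq_primitive_append
      (by rintro rfl; simp at hw)
    have hpl := hp.1.length_eq
    have hvl := hv.length_eq
    have hpos := List.length_pos_iff.2 hpne
    refine ⟨⟨(p.count true - 1, v.count true), p, v⟩, ?_, rfl⟩
    simp only [mem_sigma, mem_product, HasAntidiagonal.mem_antidiagonal, mem_primitiveDyckPaths,
      mem_dyckPaths, List.length_append] at hw ⊢
    exact ⟨by omega, ⟨by omega, hp⟩, hvl, hv⟩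

lemma MSum'_succ (n : ℕ) :
    MSum' (n + 1) = X * aeval (X + 1 : ℤ[X]) (∑ v ∈ dyckPaths n, Mpoly v) := by
  rw [MSum'_eq_sum, primitiveDyckPaths_succ, sum_image (fun _ _ _ _ h => by simpa using h),
    map_sum, mul_sum]
  exact sum_congr rfl fun v hv =>
    Mpoly_wrap (isDyck_iff_excess.1 (mem_dyckPaths.1 hv).2).1

lemma sum_Mpoly_dyckPaths_succ (n : ℕ) :
    ∑ w ∈ dyckPaths (n + 1), Mpoly w =
      ∑ ij ∈ antidiagonal n, MSum' (ij.1 + 1) * ∑ v ∈ dyckPaths ij.2, Mpoly v := by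
  rw [sum_dyckPaths_succ]
  refine sum_congr rfl fun ij _ => ?_
  rw [MSum'_eq_sum, sum_mul_sum]
  refine sum_congr rfl fun p hp => sum_congr rfl fun v _ => ?_
  exact Mpoly_append (isDyck_iff_excess.1 (mem_primitiveDyckPaths.1 hp).2.1).1 v

noncomputable def dyckSeries : PowerSeries ℤ[X] :=
  PowerSeries.mk fun n => ∑ w ∈ dyckPaths n, Mpoly w

lemma U_eq_C_mul_map_dyckSeries :
    U = PowerSeries.C X * PowerSeries.map (aeval (X + 1 : ℤ[X])).toRingHom dyckSeries := by
  ext n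
  rw [PowerSeries.coeff_C_mul, PowerSeries.coeff_map, U, dyckSeries, PowerSeries.coeff_mk,
    PowerSeries.coeff_mk, MSum'_succ]
  rfl

lemma dyckSeries_eq : dyckSeries = 1 + PowerSeries.X * U * dyckSeries := by
  ext (_ | n)
  · simp [dyckSeries, dyckPaths_zero, Mpoly]
  · rw [map_add, PowerSeries.coeff_one, if_neg n.succ_ne_zero, zero_add, mul_assoc,
      PowerSeries.coeff_succ_X_mul, PowerSeries.coeff_mul, dyckSeries, PowerSeries.coeff_mk,
      sum_Mpoly_dyckPaths_succ]
    simp only [U, PowerSeries.coeff_mk]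

theorem map_functional_equation :
    U = PowerSeries.C (R := Polynomial ℤ) Polynomial.X +
      PowerSeries.X * U *
        PowerSeries.map
          (Polynomial.aeval (Polynomial.X + 1 : Polynomial ℤ)).toRingHom U := by
  set shift : PowerSeries ℤ[X] →+* PowerSeries ℤ[X] :=
    PowerSeries.map (aeval (X + 1 : ℤ[X])).toRingHom
  have hU : U = PowerSeries.C X * shift dyckSeries := U_eq_C_mul_map_dyckSeries
  calc U = PowerSeries.C X * shift (1 + PowerSeries.X * U * dyckSeries) := by
        rw [← dyckSeries_eq, hU]
    _ = PowerSeries.C X + PowerSeries.X * (PowerSeries.C X * shift dyckSeries) * shift U := by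
        simp only [shift, map_add, map_mul, map_one, PowerSeries.map_X]
        ring
    _ = _ := by rw [← hU]
end
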